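/- arXiv:2301.05673 — 3 statements merged into one kernel-verified Lean document; each statement's English description precedes it below -/
import Mathlib

section
/- The element ν = (105 - 33√13 - 45√7 + 11√91)/2 of Q(√7,√13) satisfies ν² = (1574 + 165√91)·(8 - 3√7). -/
/-!
Writing a = √7 and b = √13, twice the element factors as 2ν = (a - 3)(15a + 11b), and the two
factors square to twice the units: (a - 3)² = 2(8 - 3a) and (15a + 11b)² = 2(1574 + 165ab).
-/

section

variable {R : Type*} [CommRing R] {a b : R}

theorem sub_three_sq_of_sq_eq_seven (ha : a ^ 2 = 7) : (a - 3) ^ 2 = 2 * (8 - 3 * a) := by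
  linear_combination ha

theorem fifteen_mul_add_eleven_mul_sq (ha : a ^ 2 = 7) (hb : b ^ 2 = 13) :
    (15 * a + 11 * b) ^ 2 = 2 * (1574 + 165 * (a * b)) := by
  linear_combination 225 * ha + 121 * hb

theorem sub_three_mul_fifteen_mul_add_eleven_mul (ha : a ^ 2 = 7) :
    (a - 3) * (15 * a + 11 * b) = 105 - 33 * b - 45 * a + 11 * (a * b) := by
  linear_combination 15 * ha

theorem two_nu_sq_eq_of_sq_eq (ha : a ^ 2 = 7) (hb : b ^ 2 = 13) :
    (105 - 33 * b - 45 * a + 11 * (a * b)) ^ 2 = 4 * ((1574 + 165 * (a * b)) * (8 - 3 * a)) := by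
  rw [← sub_three_mul_fifteen_mul_add_eleven_mul ha, mul_pow, sub_three_sq_of_sq_eq_seven ha,
    fifteen_mul_add_eleven_mul_sq ha hb]
  ring

end

/-- In F = ℚ(√7,√13) with √91 = √7·√13, the element
ν = (105 - 33√13 - 45√7 + 11√91)/2 satisfies ν² = ε₉₁ · ε₇,
where ε₉₁ = 1574 + 165√91 and ε₇ = 8 - 3√7. -/
theorem nu_sq_eq_eps91_mul_eps7 :
    let s7 : ℝ := Real.sqrt 7
    let s13 : ℝ := Real.sqrt 13
    let s91 : ℝ := s7 * s13
    ((105 - 33 * s13 - 45 * s7 + 11 * s91) / 2) ^ 2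
      = (1574 + 165 * s91) * (8 - 3 * s7) := by
  intro s7 s13 s91
  rw [div_pow, two_nu_sq_eq_of_sq_eq (Real.sq_sqrt (by norm_num)) (Real.sq_sqrt (by norm_num))]
  ring
end

section
/- Let F = Q(√7,√13), let 𝔓 = (3+√7)O_F be the prime above 2, and let α = (1 + √ν₁,₁)/(3+√7) in L = F(√ν₁,₁), where ν₁,₁ = -13 - 5√7 + 8√13 + 3√91. Then Trace_{L/F}(α) = 2/(3+√7) ∈ O_F and Norm_{L/F}(α) = (1-ν₁,₁)/(3+√7)² ∈ O_F, so α ∈ O_L. -/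
open Polynomial

lemma isIntegral_of_quadratic {x b c : ℝ} (hb : IsIntegral ℤ b) (hc : IsIntegral ℤ c)
    (h : x ^ 2 + b * x + c = 0) : IsIntegral ℤ x := by
  letI A := integralClosure ℤ ℝ
  have hx : IsIntegral A x := by
    refine ⟨X ^ 2 + (C (⟨b, hb⟩ : A) * X + C (⟨c, hc⟩ : A)), ?_, ?_⟩
    · apply Polynomial.monic_X_pow_add
      exact lt_of_le_of_lt Polynomial.degree_linear_le (by norm_num)
    · show Polynomial.eval₂ _ _ _ = 0
      simp only [eval₂_add, eval₂_mul, eval₂_X, eval₂_pow, eval₂_C]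
      show x ^ 2 + (b * x + c) = 0
      linarith [h]
  exact isIntegral_trans x hx

lemma int_quad' {x : ℝ} (b c : ℤ) (h : x ^ 2 + (b : ℝ) * x + c = 0) : IsIntegral ℤ x :=
  isIntegral_of_quadratic (isIntegral_algebraMap) (isIntegral_algebraMap) (by exact_mod_cast h)


/-- Let F = ℚ(√7,√13) ⊂ ℝ, ν₁,₁ = -13 - 5√7 + 8√13 + 3√91 (with √91 = √7·√13),
and α = (1 + √ν₁,₁)/(3+√7) in L = F(√ν₁,₁).  Then
Trace_{L/F}(α) = α + α' = 2/(3+√7) lies in O_F,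
Norm_{L/F}(α) = α·α' = (1-ν₁,₁)/(3+√7)² lies in O_F (where α' is the conjugate
of α over F), and consequently α ∈ O_L, i.e. α is integral over ℤ. -/
theorem alpha_trace_norm_integral :
    let s7 : ℝ := Real.sqrt 7
    let s13 : ℝ := Real.sqrt 13
    let ν : ℝ := -13 - 5 * s7 + 8 * s13 + 3 * (s7 * s13)
    let F : IntermediateField ℚ ℝ :=
      IntermediateField.adjoin ℚ ({Real.sqrt 7, Real.sqrt 13} : Set ℝ)
    let α : ℝ := (1 + Real.sqrt ν) / (3 + s7)
    let α' : ℝ := (1 - Real.sqrt ν) / (3 + s7)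
    (α + α' = 2 / (3 + s7)) ∧
      (2 / (3 + s7) ∈ F ∧ IsIntegral ℤ (2 / (3 + s7))) ∧
      (α * α' = (1 - ν) / (3 + s7) ^ 2) ∧
      ((1 - ν) / (3 + s7) ^ 2 ∈ F ∧ IsIntegral ℤ ((1 - ν) / (3 + s7) ^ 2)) ∧
      IsIntegral ℤ α := by
  intro s7 s13 ν F α α'
  have h7nn : (0:ℝ) ≤ 7 := by norm_num
  have h13nn : (0:ℝ) ≤ 13 := by norm_num
  have h7 : s7 ^ 2 = 7 := Real.sq_sqrt h7nn
  have h13 : s13 ^ 2 = 13 := Real.sq_sqrt h13nn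
  have hs7nn : 0 ≤ s7 := Real.sqrt_nonneg 7
  have hs13nn : 0 ≤ s13 := Real.sqrt_nonneg 13
  have hpos : (0:ℝ) < 3 + s7 := by linarith
  have hne : (3 + s7) ≠ 0 := ne_of_gt hpos
  have hνnn : 0 ≤ ν := by
    show (0:ℝ) ≤ -13 - 5 * s7 + 8 * s13 + 3 * (s7 * s13)
    nlinarith [h7, h13, hs7nn, hs13nn]
  have hν : Real.sqrt ν ^ 2 = ν := Real.sq_sqrt hνnn
  -- simplifications of the trace and norm
  have htr : 2 / (3 + s7) = 3 - s7 := by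
    rw [div_eq_iff hne]; nlinarith [h7]
  have hnm : (1 - ν) / (3 + s7) ^ 2 = (7 - 2 * s7 - s13) / 2 := by
    rw [div_eq_div_iff (by positivity) (by norm_num)]
    show (1 - (-13 - 5 * s7 + 8 * s13 + 3 * (s7 * s13))) * 2 = _
    nlinarith [h7, h13]
  -- memberships
  have hm7 : s7 ∈ F := IntermediateField.subset_adjoin ℚ _ (by left; rfl)
  have hm13 : s13 ∈ F := IntermediateField.subset_adjoin ℚ _ (by right; rfl)
  -- integrality of pieces
  have hT : IsIntegral ℤ (3 - s7) := by
    apply int_quad' (-6) 2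
    push_cast; nlinarith [h7]
  have hz : IsIntegral ℤ ((1 - s13) / 2) := by
    apply int_quad' (-1) (-3)
    push_cast
    field_simp
    nlinarith [h13]
  have hN : IsIntegral ℤ ((7 - 2 * s7 - s13) / 2) := by
    have : (7 - 2 * s7 - s13) / 2 = (3 - s7) + ((1 - s13) / 2) := by ring
    rw [this]
    exact hT.add hz
  refine ⟨?_, ⟨?_, ?_⟩, ?_, ⟨?_, ?_⟩, ?_⟩
  · show (1 + Real.sqrt ν) / (3 + s7) + (1 - Real.sqrt ν) / (3 + s7) = 2 / (3 + s7)
    rw [← add_div]; ring_nf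
  · rw [htr]
    exact sub_mem (ofNat_mem F 3) hm7
  · rw [htr]; exact hT
  · show (1 + Real.sqrt ν) / (3 + s7) * ((1 - Real.sqrt ν) / (3 + s7)) = (1 - ν) / (3 + s7) ^ 2
    rw [div_mul_div_comm, ← sq]
    congr 1
    nlinarith [hν]
  · rw [hnm]
    exact div_mem (sub_mem (sub_mem (ofNat_mem F 7) (mul_mem (ofNat_mem F 2) hm7)) hm13) (ofNat_mem F 2)
  · rw [hnm]; exact hN
  · apply isIntegral_of_quadratic hT.neg hN
    show ((1 + Real.sqrt ν) / (3 + s7)) ^ 2 + (-(3 - s7)) * ((1 + Real.sqrt ν) / (3 + s7)) + (7 - 2 * s7 - s13) / 2 = 0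
    field_simp
    linear_combination 2 * hν + (2 * Real.sqrt ν - 2 * s7 - s13 - 3) * h7
end

section
/- In F = Q(√7,√13), the element 3 + √7 has norm 4 to Q and generates an ideal 𝔓 of O_F with 𝔓² = 2O_F. -/
/-! The unit `8 + 3√7` of `ℤ[√7]` (its conjugate `8 - 3√7` is its inverse, as `8² - 7·3² = 1`)
satisfies `(3 + √7)² = 16 + 6√7 = 2 (8 + 3√7)`, so `(3 + √7)` squares to `2` as an ideal; the norm
is `((3 + √7)(3 - √7))² = 2²`. -/

theorem isIntegral_of_sq_eq_intCast {A : Type*} [Ring A] {x : A} {n : ℤ} (h : x ^ 2 = n) :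
    IsIntegral ℤ x :=
  .of_pow two_pos (h ▸ isIntegral_intCast n)

theorem IsIntegral.intCast_add_intCast_mul {A : Type*} [CommRing A] {x : A}
    (hx : IsIntegral ℤ x) (a b : ℤ) : IsIntegral ℤ ((a : A) + b * x) :=
  (isIntegral_intCast a).add ((isIntegral_intCast b).mul hx)

theorem IntermediateField.intCast_add_intCast_mul_mem {K L : Type*} [Field K] [Field L]
    [Algebra K L] (S : IntermediateField K L) {x : L} (hx : x ∈ S) (a b : ℤ) :
    (a : L) + b * x ∈ S :=
  add_mem (S.intCast_mem a) (mul_mem (S.intCast_mem b) hx)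

/-- In F = ℚ(√7,√13), the element 3 + √7 has norm 4 to ℚ (the product of its
four conjugates 3±√7, each occurring twice, is 4), and generates an ideal 𝔓 of
O_F with 𝔓² = 2·O_F: concretely, (3+√7)² = 2·u for a unit u of O_F. -/
theorem three_add_sqrt7_norm_and_ideal_square :
    let s7 : ℝ := Real.sqrt 7
    let F : IntermediateField ℚ ℝ :=
      IntermediateField.adjoin ℚ ({Real.sqrt 7, Real.sqrt 13} : Set ℝ)
    ((3 + s7) * (3 + s7) * (3 - s7) * (3 - s7) = 4) ∧
      ∃ u : ℝ, u ∈ F ∧ IsIntegral ℤ u ∧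
        (∃ v : ℝ, v ∈ F ∧ IsIntegral ℤ v ∧ u * v = 1) ∧
        (3 + s7) ^ 2 = 2 * u := by
  intro s7 F
  have h7 : s7 ^ 2 = 7 := Real.sq_sqrt (by norm_num)
  have hs7 : IsIntegral ℤ s7 := isIntegral_of_sq_eq_intCast (n := 7) (by exact_mod_cast h7)
  have hmem : s7 ∈ F := IntermediateField.subset_adjoin ℚ _ (Set.mem_insert _ _)
  refine ⟨by linear_combination (s7 ^ 2 - 11) * h7, (8 : ℤ) + (3 : ℤ) * s7,
    F.intCast_add_intCast_mul_mem hmem 8 3, hs7.intCast_add_intCast_mul 8 3,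
    ⟨(8 : ℤ) + (-3 : ℤ) * s7, F.intCast_add_intCast_mul_mem hmem 8 (-3),
      hs7.intCast_add_intCast_mul 8 (-3), ?_⟩, ?_⟩
  · push_cast
    linear_combination (-9) * h7
  · push_cast
    linear_combination h7
end
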